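/- For every real x with |x| < 1 and every nonnegative integer m, the series sum_{n=0}^∞ n^m x^n converges and equals (1/(1-x)) * ω_m(x/(1-x)), where ω_m(t) = sum_{k=0}^m S(m,k) * k! * t^k is the geometric polynomial. -/

import Mathlib

/-!
Expanding `n ^ m` in falling factorials, `n ^ m = ∑ₖ S(m, k) n(n-1)⋯(n-k+1)`, reduces the series
to the negative binomial series `∑ₙ n(n-1)⋯(n-k+1) xⁿ = k! xᵏ / (1 - x)ᵏ⁺¹`, and
`xᵏ / (1 - x)ᵏ⁺¹ = (1 / (1 - x)) (x / (1 - x))ᵏ`.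
-/

/-- Stirling numbers of the second kind, via the standard recurrence. -/
def stirling2 : ℕ → ℕ → ℕ
  | 0, 0 => 1
  | 0, _ + 1 => 0
  | _ + 1, 0 => 0
  | m + 1, n + 1 => (n + 1) * stirling2 m (n + 1) + stirling2 m n

open Finset Polynomial

theorem stirling2_eq_stirlingSecond : stirling2 = Nat.stirlingSecond := by
  funext m k
  induction m generalizing k with
  | zero => cases k <;> rfl
  | succ m ih => cases k <;> simp [stirling2, Nat.stirlingSecond_succ_succ, ih]

theorem Nat.sum_range_stirlingSecond_succ_smul {M : Type*} [AddCommMonoid M] (m : ℕ)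
    (f : ℕ → M) :
    ∑ k ∈ range (m + 2), stirlingSecond (m + 1) k • f k =
      ∑ k ∈ range (m + 1), stirlingSecond m k • (k • f k + f (k + 1)) := by
  set g : ℕ → M := fun k ↦ (k * stirlingSecond m k) • f k
  have hshift : ∑ j ∈ range (m + 1), g (j + 1) = ∑ k ∈ range (m + 1), g k := by
    have h := sum_range_succ' g (m + 1)
    rw [sum_range_succ] at h
    simpa [g, stirlingSecond_eq_zero_of_lt (Nat.lt_succ_self m)] using h.symm
  rw [sum_range_succ', stirlingSecond_succ_zero, zero_smul, add_zero]
  simp only [stirlingSecond_succ_succ, add_smul, sum_add_distrib, smul_add]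
  congr 1
  convert hshift using 2 with k
  simp only [g, mul_smul]
  exact smul_comm _ _ _

theorem Polynomial.X_mul_descPochhammer (R : Type*) [Ring R] (k : ℕ) :
    X * descPochhammer R k = k • descPochhammer R k + descPochhammer R (k + 1) := by
  rw [descPochhammer_succ_right, mul_sub, ← X_mul, nsmul_eq_mul, ← Nat.cast_comm]
  abel

theorem Polynomial.X_pow_eq_sum_stirlingSecond_smul_descPochhammer (R : Type*) [Ring R]
    (m : ℕ) :
    (X : R[X]) ^ m = ∑ k ∈ range (m + 1), Nat.stirlingSecond m k • descPochhammer R k := by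
  induction m with
  | zero => simp
  | succ m ih =>
    rw [Nat.sum_range_stirlingSecond_succ_smul, pow_succ', ih, mul_sum]
    simp only [mul_smul_comm, X_mul_descPochhammer]

theorem Nat.cast_pow_eq_sum_stirlingSecond_mul_descFactorial {R : Type*} [Ring R] (m n : ℕ) :
    (n : R) ^ m = ∑ k ∈ range (m + 1), (stirlingSecond m k : R) * n.descFactorial k := by
  simpa [eval_finsetSum, eval_X_pow, nsmul_eq_mul, descPochhammer_eval_eq_descFactorial] using
    congrArg (eval (n : R)) (X_pow_eq_sum_stirlingSecond_smul_descPochhammer R m)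

theorem hasSum_choose_mul_pow_of_norm_lt_one {𝕜 : Type*} [NormedField 𝕜] (k : ℕ) {r : 𝕜}
    (hr : ‖r‖ < 1) :
    HasSum (fun n ↦ (n.choose k : 𝕜) * r ^ n) (r ^ k / (1 - r) ^ (k + 1)) := by
  have h := (hasSum_choose_mul_geometric_of_norm_lt_one k hr).mul_right (r ^ k)
  simp only [mul_assoc, ← pow_add, one_div_mul_eq_div] at h
  refine (Function.Injective.hasSum_iff (add_left_injective k) fun n hn ↦ ?_).1 h
  have hnk : n < k := by
    by_contra! hkn
    exact hn ⟨n - k, Nat.sub_add_cancel hkn⟩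
  simp [Nat.choose_eq_zero_of_lt hnk]

theorem hasSum_descFactorial_mul_pow_of_norm_lt_one {𝕜 : Type*} [NormedField 𝕜] (k : ℕ)
    {r : 𝕜} (hr : ‖r‖ < 1) :
    HasSum (fun n ↦ (n.descFactorial k : 𝕜) * r ^ n)
      (k.factorial * r ^ k / (1 - r) ^ (k + 1)) := by
  simpa [Nat.descFactorial_eq_factorial_mul_choose, mul_assoc, mul_div_assoc] using
    (hasSum_choose_mul_pow_of_norm_lt_one k hr).mul_left (k.factorial : 𝕜)

theorem geometric_series_pow_eq_geometric_poly (x : ℝ) (hx : |x| < 1) (m : ℕ) :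
    HasSum (fun n : ℕ => (n : ℝ) ^ m * x ^ n)
      ((1 / (1 - x)) *
        ∑ k ∈ Finset.range (m + 1),
          (stirling2 m k : ℝ) * (k.factorial : ℝ) * (x / (1 - x)) ^ k) := by
  have hx' : ‖x‖ < 1 := by rwa [Real.norm_eq_abs]
  have hterm : (fun n : ℕ ↦ (n : ℝ) ^ m * x ^ n) = fun n ↦
      ∑ k ∈ range (m + 1), (Nat.stirlingSecond m k : ℝ) * ((n.descFactorial k : ℝ) * x ^ n) := by
    funext n
    simp only [Nat.cast_pow_eq_sum_stirlingSecond_mul_descFactorial, sum_mul, mul_assoc]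
  have hsum : HasSum (fun n : ℕ ↦
      ∑ k ∈ range (m + 1), (Nat.stirlingSecond m k : ℝ) * ((n.descFactorial k : ℝ) * x ^ n))
      (∑ k ∈ range (m + 1),
        (Nat.stirlingSecond m k : ℝ) * (k.factorial * x ^ k / (1 - x) ^ (k + 1))) :=
    hasSum_sum fun k _ ↦ (hasSum_descFactorial_mul_pow_of_norm_lt_one k hx').mul_left _
  rw [hterm, stirling2_eq_stirlingSecond, mul_sum]
  convert hsum using 2 with k
  rw [div_pow, pow_succ]
  generalize 1 - x = y
  ring
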